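/- arXiv:2201.00354 — 2 statements merged into one kernel-verified Lean document; each statement's English description precedes it below -/
import Mathlib

section
/- Let A ⊆ Fin L with |A| = M be such that Y is conditionally independent of X_{Aᶜ} given X_A, let λ ≥ 0 and M ≤ N ≤ L. Then every instance-wise selection function G : (Fin L → V) → Finset (Fin L) satisfying, for each x with P(X = x) > 0, A ⊆ G(x) and |G(x)| = N, minimizes the expected objective E_X[ L_N(G(X); X) ] = ∑_{x : P(X=x)>0} P(X = x) · L_N(G(x); x) over all instance-wise selection functions G' : (Fin L → V) → Finset (Fin L), and the minimum value is 0. -/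
open scoped Classical
open Finset

/-- Probability of an event under a (finite) probability mass `P`. -/
noncomputable def pr {Ω : Type*} [Fintype Ω] (P : Ω → ℝ) (E : Ω → Prop) : ℝ :=
  ∑ ω, if E ω then P ω else 0

/-- Conditional probability `P(E | C)`. -/
noncomputable def condPr {Ω : Type*} [Fintype Ω] (P : Ω → ℝ) (E C : Ω → Prop) : ℝ :=
  pr P (fun ω => E ω ∧ C ω) / pr P C

/-- The event `{X_F = x_F}`, i.e. `X ω` agrees with `x` on the index set `F`. -/
def evSel {Ω V : Type*} {L : ℕ} (X : Ω → Fin L → V) (F : Finset (Fin L))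
    (x : Fin L → V) : Ω → Prop :=
  fun ω => ∀ i ∈ F, X ω i = x i

/-- Kullback–Leibler divergence between two pmfs on a finite type. -/
noncomputable def klDiv {𝒴 : Type*} [Fintype 𝒴] (p q : 𝒴 → ℝ) : ℝ :=
  ∑ y, p y * Real.log (p y / q y)

/-- The conditional distribution `P(Y = · | C)`. -/
noncomputable def condDist {Ω 𝒴 : Type*} [Fintype Ω] (P : Ω → ℝ) (Y : Ω → 𝒴)
    (C : Ω → Prop) : 𝒴 → ℝ :=
  fun y => condPr P (fun ω => Y ω = y) C

/-- Per-instance INVASE objective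
`L_N(F; x) = KL(P(Y = · | X = x) ‖ P(Y = · | X_F = x_F)) + λ·| |F| − N |`. -/
noncomputable def invaseObj {Ω V 𝒴 : Type*} [Fintype Ω] [Fintype 𝒴] {L : ℕ}
    (P : Ω → ℝ) (X : Ω → Fin L → V) (Y : Ω → 𝒴) (lam : ℝ) (N : ℕ)
    (F : Finset (Fin L)) (x : Fin L → V) : ℝ :=
  klDiv (condDist P Y (fun ω => X ω = x)) (condDist P Y (evSel X F x))
    + lam * |(F.card : ℝ) - (N : ℝ)|

/-- Expected INVASE objective `E_X[L_N(G(X); X)]` of an instance-wise selection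
function `G`, summing over the instances `x` with `P(X = x) > 0`. -/
noncomputable def expObj {Ω V 𝒴 : Type*} [Fintype Ω] [Fintype V] [Fintype 𝒴] {L : ℕ}
    (P : Ω → ℝ) (X : Ω → Fin L → V) (Y : Ω → 𝒴) (lam : ℝ) (N : ℕ)
    (G : (Fin L → V) → Finset (Fin L)) : ℝ :=
  ∑ x ∈ Finset.univ.filter (fun x : Fin L → V => 0 < pr P (fun ω => X ω = x)),
    pr P (fun ω => X ω = x) * invaseObj P X Y lam N (G x) x

/-!
Conditional independence makes `P(Y = · | X_F = x_F)` the same distribution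
`P(Y = · | X_A = x_A)` for every `F ⊇ A` of positive probability: each atom `{X = x'}` inside
`{X_F = x_F}` splits its mass between the values of `Y` in that common proportion.
Taking `F = univ` and `F = G(x)` shows that the KL term of `L_N(G(x); x)` vanishes, and
`|G(x)| = N` kills the penalty. Every objective value is nonnegative by Gibbs' inequality,
so `G` attains the minimum `0`.
-/

section Probability

variable {Ω : Type*} [Fintype Ω] (P : Ω → ℝ)

lemma pr_nonneg (hP : ∀ ω, 0 ≤ P ω) (E : Ω → Prop) : 0 ≤ pr P E :=
  Finset.sum_nonneg fun ω _ => by split_ifs <;> simp [hP ω]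

lemma pr_mono (hP : ∀ ω, 0 ≤ P ω) {E E' : Ω → Prop} (h : ∀ ω, E ω → E' ω) :
    pr P E ≤ pr P E' :=
  Finset.sum_le_sum fun ω _ => by
    by_cases hE : E ω
    · simp [hE, h ω hE]
    · by_cases hE' : E' ω <;> simp [hE, hE', hP ω]

lemma pr_congr {E E' : Ω → Prop} (h : ∀ ω, E ω ↔ E' ω) : pr P E = pr P E' := by
  simp only [pr, h]

lemma pr_eq_sum_fiber {β : Type*} [Fintype β] (f : Ω → β) (E : Ω → Prop) :
    pr P E = ∑ b, pr P (fun ω => E ω ∧ f ω = b) := by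
  unfold pr
  rw [Finset.sum_comm]
  refine Finset.sum_congr rfl fun ω _ => ?_
  by_cases hE : E ω <;> simp [hE]

variable {𝒴 : Type*} (Y : Ω → 𝒴)

lemma condDist_nonneg (hP : ∀ ω, 0 ≤ P ω) (C : Ω → Prop) (y : 𝒴) :
    0 ≤ condDist P Y C y :=
  div_nonneg (pr_nonneg P hP _) (pr_nonneg P hP _)

lemma sum_condDist [Fintype 𝒴] (C : Ω → Prop) (hC : pr P C ≠ 0) :
    ∑ y, condDist P Y C y = 1 := by
  have htotal : ∑ y, pr P (fun ω => Y ω = y ∧ C ω) = pr P C := by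
    rw [pr_eq_sum_fiber P Y C]
    exact Finset.sum_congr rfl fun y _ => pr_congr P fun ω => and_comm
  simp only [condDist, condPr, ← Finset.sum_div, htotal, div_self hC]

lemma condDist_eq_zero_of_imp (hP : ∀ ω, 0 ≤ P ω) {C C' : Ω → Prop}
    (hCC' : ∀ ω, C ω → C' ω) (hC' : pr P C' ≠ 0) {y : 𝒴} (hy : condDist P Y C' y = 0) :
    condDist P Y C y = 0 := by
  have hnum' : pr P (fun ω => Y ω = y ∧ C' ω) = 0 :=
    (div_eq_zero_iff.mp hy).resolve_right hC'
  have hnum : pr P (fun ω => Y ω = y ∧ C ω) = 0 :=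
    le_antisymm (hnum' ▸ pr_mono P hP fun ω h => ⟨h.1, hCC' ω h.2⟩) (pr_nonneg P hP _)
  simp only [condDist, condPr, hnum, zero_div]

end Probability

section KullbackLeibler

variable {𝒴 : Type*} [Fintype 𝒴]

lemma klDiv_self (p : 𝒴 → ℝ) : klDiv p p = 0 :=
  Finset.sum_eq_zero fun y _ => by by_cases h : p y = 0 <;> simp [h]

lemma sub_le_mul_log_div {p q : ℝ} (hp : 0 < p) (hq : 0 < q) : p - q ≤ p * Real.log (p / q) :=
  calc p - q = p * (1 - (p / q)⁻¹) := by field_simp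
    _ ≤ p * Real.log (p / q) :=
      mul_le_mul_of_nonneg_left (Real.one_sub_inv_le_log_of_pos (by positivity)) hp.le

lemma klDiv_nonneg {p q : 𝒴 → ℝ} (hp : ∀ y, 0 ≤ p y) (hq : ∀ y, 0 ≤ q y)
    (hsum : ∑ y, q y ≤ ∑ y, p y) (hpq : ∀ y, q y = 0 → p y = 0) : 0 ≤ klDiv p q := by
  have hterm : ∀ y, p y - q y ≤ p y * Real.log (p y / q y) := by
    intro y
    rcases (hp y).eq_or_lt with hp0 | hp0
    · simp [← hp0, hq y]
    · have hq0 : 0 < q y := (hq y).lt_of_ne fun h => hp0.ne' (hpq y h.symm)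
      exact sub_le_mul_log_div hp0 hq0
  calc (0 : ℝ) ≤ ∑ y, (p y - q y) := by rw [Finset.sum_sub_distrib]; linarith
    _ ≤ klDiv p q := Finset.sum_le_sum fun y _ => hterm y

end KullbackLeibler

section SelectionEvents

variable {Ω V : Type*} {L : ℕ} (X : Ω → Fin L → V)

lemma evSel_univ (x : Fin L → V) : evSel X univ x = fun ω => X ω = x := by
  funext ω
  simp [evSel, funext_iff]

lemma evSel_of_eq (F : Finset (Fin L)) {x : Fin L → V} {ω : Ω} (h : X ω = x) :
    evSel X F x ω :=
  fun i _ => by rw [h]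

lemma evSel_mono {A F : Finset (Fin L)} (hAF : A ⊆ F) (x : Fin L → V) (ω : Ω)
    (h : evSel X F x ω) : evSel X A x ω :=
  fun i hi => h i (hAF hi)

lemma evSel_congr {A : Finset (Fin L)} {x x' : Fin L → V} (h : ∀ i ∈ A, x' i = x i) :
    evSel X A x' = evSel X A x := by
  funext ω
  exact propext (forall₂_congr fun i hi => by rw [h i hi])

end SelectionEvents

section Selection

variable {Ω V 𝒴 : Type*} [Fintype Ω] {L : ℕ}
  (P : Ω → ℝ) (X : Ω → Fin L → V) (Y : Ω → 𝒴)

lemma pr_evSel_pos (hP : ∀ ω, 0 ≤ P ω) (F : Finset (Fin L)) {x : Fin L → V}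
    (hx : 0 < pr P (fun ω => X ω = x)) : 0 < pr P (evSel X F x) :=
  hx.trans_le (pr_mono P hP fun _ => evSel_of_eq X F)

lemma pr_and_evSel [Fintype V] (E : Ω → Prop) (F : Finset (Fin L)) (x : Fin L → V) :
    pr P (fun ω => E ω ∧ evSel X F x ω)
      = ∑ x', if ∀ i ∈ F, x' i = x i then pr P (fun ω => E ω ∧ X ω = x') else 0 := by
  rw [pr_eq_sum_fiber P X]
  refine Finset.sum_congr rfl fun x' _ => ?_
  split_ifs with hx'
  · exact pr_congr P fun ω => ⟨fun h => ⟨h.1.1, h.2⟩,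
      fun h => ⟨⟨h.1, fun i hi => h.2 ▸ hx' i hi⟩, h.2⟩⟩
  · refine Finset.sum_eq_zero fun ω _ => if_neg ?_
    rintro ⟨⟨-, hF⟩, rfl⟩
    exact hx' hF

/-- `Y` is conditionally independent of `X_{Aᶜ}` given `X_A`. -/
def CondIndepSel (A : Finset (Fin L)) : Prop :=
  ∀ (x : Fin L → V) (y : 𝒴), 0 < pr P (evSel X A x) →
    pr P (fun ω => Y ω = y ∧ X ω = x) * pr P (evSel X A x)
      = pr P (fun ω => Y ω = y ∧ evSel X A x ω) * pr P (fun ω => X ω = x)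

variable {P X Y}

lemma CondIndepSel.pr_and_eq_condDist_mul {A : Finset (Fin L)} (hCI : CondIndepSel P X Y A)
    {x : Fin L → V} (hA : 0 < pr P (evSel X A x)) (y : 𝒴) :
    pr P (fun ω => Y ω = y ∧ X ω = x)
      = condDist P Y (evSel X A x) y * pr P (fun ω => X ω = x) := by
  rw [condDist, condPr, div_mul_eq_mul_div, eq_div_iff hA.ne']
  exact hCI x y hA

lemma CondIndepSel.condDist_evSel [Fintype V] {A F : Finset (Fin L)}
    (hCI : CondIndepSel P X Y A) (hP : ∀ ω, 0 ≤ P ω) (hAF : A ⊆ F) {x : Fin L → V}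
    (hF : 0 < pr P (evSel X F x)) :
    condDist P Y (evSel X F x) = condDist P Y (evSel X A x) := by
  have hA : 0 < pr P (evSel X A x) := hF.trans_le (pr_mono P hP (evSel_mono X hAF x))
  have hmass : pr P (evSel X F x) = ∑ x', if ∀ i ∈ F, x' i = x i
      then pr P (fun ω => X ω = x') else 0 := by
    simpa only [true_and] using pr_and_evSel P X (fun _ => True) F x
  funext y
  have hjoint : pr P (fun ω => Y ω = y ∧ evSel X F x ω)
      = condDist P Y (evSel X A x) y * pr P (evSel X F x) := by
    rw [pr_and_evSel, hmass, Finset.mul_sum]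
    refine Finset.sum_congr rfl fun x' _ => ?_
    split_ifs with hx'
    · have hAx' : evSel X A x' = evSel X A x := evSel_congr X fun i hi => hx' i (hAF hi)
      rw [hCI.pr_and_eq_condDist_mul (hAx' ▸ hA), hAx']
    · rw [mul_zero]
  rw [condDist, condPr, hjoint, mul_div_cancel_right₀ _ hF.ne']

lemma CondIndepSel.condDist_eq [Fintype V] {A F : Finset (Fin L)}
    (hCI : CondIndepSel P X Y A) (hP : ∀ ω, 0 ≤ P ω) (hAF : A ⊆ F) {x : Fin L → V}
    (hx : 0 < pr P (fun ω => X ω = x)) :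
    condDist P Y (fun ω => X ω = x) = condDist P Y (evSel X F x) := by
  have hF := pr_evSel_pos P X hP F hx
  rw [← evSel_univ] at hx ⊢
  rw [hCI.condDist_evSel hP (subset_univ A) hx, hCI.condDist_evSel hP hAF hF]

variable [Fintype 𝒴]

lemma invaseObj_nonneg (hP : ∀ ω, 0 ≤ P ω) {lam : ℝ} (hlam : 0 ≤ lam) (N : ℕ)
    (F : Finset (Fin L)) {x : Fin L → V} (hx : 0 < pr P (fun ω => X ω = x)) :
    0 ≤ invaseObj P X Y lam N F x := by
  have hF := pr_evSel_pos P X hP F hx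
  refine add_nonneg (klDiv_nonneg (condDist_nonneg P Y hP _) (condDist_nonneg P Y hP _)
    ?_ fun y => condDist_eq_zero_of_imp P Y hP (fun _ => evSel_of_eq X F) hF.ne') ?_
  · rw [sum_condDist P Y _ hx.ne', sum_condDist P Y _ hF.ne']
  · exact mul_nonneg hlam (abs_nonneg _)

lemma invaseObj_eq_zero [Fintype V] {A F : Finset (Fin L)} (hCI : CondIndepSel P X Y A)
    (hP : ∀ ω, 0 ≤ P ω) (hAF : A ⊆ F) (lam : ℝ) {x : Fin L → V}
    (hx : 0 < pr P (fun ω => X ω = x)) : invaseObj P X Y lam F.card F x = 0 := by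
  simp [invaseObj, hCI.condDist_eq hP hAF hx, klDiv_self]

end Selection

theorem stmt3_general {Ω V 𝒴 : Type*} [Fintype Ω] [Fintype V] [Fintype 𝒴] {L N : ℕ}
    (X : Ω → Fin L → V) (Y : Ω → 𝒴) (P : Ω → ℝ)
    (hP : ∀ ω, 0 ≤ P ω)
    (A : Finset (Fin L))
    (hCI : ∀ (x : Fin L → V) (y : 𝒴), 0 < pr P (evSel X A x) →
      pr P (fun ω => Y ω = y ∧ X ω = x) * pr P (evSel X A x)
        = pr P (fun ω => Y ω = y ∧ evSel X A x ω) * pr P (fun ω => X ω = x))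
    (lam : ℝ) (hlam : 0 ≤ lam)
    (G : (Fin L → V) → Finset (Fin L))
    (hG : ∀ x : Fin L → V, 0 < pr P (fun ω => X ω = x) → A ⊆ G x ∧ (G x).card = N) :
    (∀ G' : (Fin L → V) → Finset (Fin L),
        expObj P X Y lam N G ≤ expObj P X Y lam N G') ∧
      expObj P X Y lam N G = 0 := by
  have hzero : expObj P X Y lam N G = 0 := by
    refine Finset.sum_eq_zero fun x hx => ?_
    have hx := (Finset.mem_filter.mp hx).2
    obtain ⟨hAG, hcard⟩ := hG x hx
    rw [← hcard, invaseObj_eq_zero hCI hP hAG lam hx, mul_zero]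
  refine ⟨fun G' => hzero ▸ Finset.sum_nonneg fun x hx => ?_, hzero⟩
  have hx := (Finset.mem_filter.mp hx).2
  exact mul_nonneg hx.le (invaseObj_nonneg hP hlam N (G' x) hx)

/-- Any instance-wise selection function `G` with `A ⊆ G(x)` and `|G(x)| = N` at every
`x` with `P(X = x) > 0` minimizes the expected INVASE objective over all instance-wise
selection functions, and the minimum value is `0`. -/
theorem stmt3 {Ω V 𝒴 : Type*} [Fintype Ω] [Fintype V] [Fintype 𝒴] {L M N : ℕ}
    (X : Ω → Fin L → V) (Y : Ω → 𝒴) (P : Ω → ℝ)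
    (hP : ∀ ω, 0 ≤ P ω) (hPsum : ∑ ω, P ω = 1)
    (A : Finset (Fin L)) (hAcard : A.card = M)
    (hCI : ∀ (x : Fin L → V) (y : 𝒴), 0 < pr P (evSel X A x) →
      pr P (fun ω => Y ω = y ∧ X ω = x) * pr P (evSel X A x)
        = pr P (fun ω => Y ω = y ∧ evSel X A x ω) * pr P (fun ω => X ω = x))
    (lam : ℝ) (hlam : 0 ≤ lam) (hMN : M ≤ N) (hNL : N ≤ L)
    (G : (Fin L → V) → Finset (Fin L))
    (hG : ∀ x : Fin L → V, 0 < pr P (fun ω => X ω = x) → A ⊆ G x ∧ (G x).card = N) :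
    (∀ G' : (Fin L → V) → Finset (Fin L),
        expObj P X Y lam N G ≤ expObj P X Y lam N G') ∧
      expObj P X Y lam N G = 0 :=
  stmt3_general X Y P hP A hCI lam hlam G hG
end

section
/- Suppose r(s, mask(g₁(s), a)) = r(s, a) and T(s, mask(g₂(s), a)) = T(s, a) for all s ∈ S and a : Fin d → ℝ, and let g be the pointwise OR of g₁ and g₂. If a policy π : S → A is optimal, i.e. V^π(s) = V*(s) := ⨆_{π' : S → A} V^{π'}(s) for every s ∈ S, then the masked policy π^{(g)}, defined by π^{(g)}(s) = mask(g(s), π(s)), is also optimal: V^{π^{(g)}}(s) = V*(s) for every s ∈ S. -/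
/-!
Masking with `g = g₁ ∨ g₂` keeps every coordinate that affects the reward or the transition, so
the masked policy produces the same trajectory and the same rewards as `π`; hence it has the same
value function as `π`, which is optimal.
-/

/-- Trajectory of a deterministic MDP under policy `π` from initial state `s`:
`s₀ = s`, `s_{t+1} = T (s_t, π s_t)`. -/
def traj {S A : Type*} (T : S × A → S) (π : S → A) (s : S) : ℕ → S
  | 0 => s
  | t + 1 => T (traj T π s t, π (traj T π s t))

/-- Value function `V^π(s) = ∑_{t=0}^∞ γ^t · r(s_t, π s_t)`. -/
noncomputable def Vpi {S A : Type*} (T : S × A → S) (r : S × A → ℝ) (γ : ℝ)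
    (π : S → A) (s : S) : ℝ :=
  ∑' t : ℕ, γ ^ t * r (traj T π s t, π (traj T π s t))

/-- Masked action: `mask(m, a)(i) = a i` if `m i = true`, else `0`. -/
def maskAct {d : ℕ} (m : Fin d → Bool) (a : Fin d → ℝ) : Fin d → ℝ :=
  fun i => if m i then a i else 0

/-- Optimal state value `V*(s) = ⨆_π V^π(s)`. -/
noncomputable def Vstar {S : Type*} {d : ℕ} (T : S × (Fin d → ℝ) → S)
    (r : S × (Fin d → ℝ) → ℝ) (γ : ℝ) (s : S) : ℝ :=
  ⨆ π : S → Fin d → ℝ, Vpi T r γ π s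

section Mask

variable {d : ℕ} {m₁ m₂ : Fin d → Bool}

theorem maskAct_maskAct_of_imp (h : ∀ i, m₁ i = true → m₂ i = true) (a : Fin d → ℝ) :
    maskAct m₁ (maskAct m₂ a) = maskAct m₁ a := by
  funext i
  cases h₁ : m₁ i
  · simp [maskAct, h₁]
  · simp [maskAct, h₁, h i h₁]

theorem apply_maskAct_of_imp {β : Type*} {f : (Fin d → ℝ) → β}
    (hf : ∀ a, f (maskAct m₁ a) = f a) (h : ∀ i, m₁ i = true → m₂ i = true)
    (a : Fin d → ℝ) : f (maskAct m₂ a) = f a := by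
  rw [← hf (maskAct m₂ a), maskAct_maskAct_of_imp h, hf]

end Mask

section Policy

variable {S A : Type*} {T : S × A → S} {π π' : S → A}

theorem traj_eq_of_transition_eq (hT : ∀ s, T (s, π' s) = T (s, π s)) (s : S) :
    traj T π' s = traj T π s := by
  funext t
  induction t with
  | zero => rfl
  | succ t ih => simp only [traj, ih, hT]

theorem Vpi_eq_of_transition_eq_of_reward_eq {r : S × A → ℝ} (γ : ℝ)
    (hT : ∀ s, T (s, π' s) = T (s, π s)) (hr : ∀ s, r (s, π' s) = r (s, π s)) :
    Vpi T r γ π' = Vpi T r γ π := by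
  funext s
  simp only [Vpi, traj_eq_of_transition_eq hT, hr]

end Policy

theorem stmt10_general {S : Type*} {d : ℕ}
    (T : S × (Fin d → ℝ) → S) (r : S × (Fin d → ℝ) → ℝ) (γ : ℝ)
    (g₁ g₂ g : S → Fin d → Bool)
    (hg : ∀ (s : S) (i : Fin d), g s i = (g₁ s i || g₂ s i))
    (hr : ∀ (s : S) (a : Fin d → ℝ), r (s, maskAct (g₁ s) a) = r (s, a))
    (hT : ∀ (s : S) (a : Fin d → ℝ), T (s, maskAct (g₂ s) a) = T (s, a))
    (π : S → Fin d → ℝ)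
    (hopt : ∀ s : S, Vpi T r γ π s = Vstar T r γ s) :
    ∀ s : S, Vpi T r γ (fun s' => maskAct (g s') (π s')) s = Vstar T r γ s := by
  have hV : Vpi T r γ (fun s' => maskAct (g s') (π s')) = Vpi T r γ π :=
    Vpi_eq_of_transition_eq_of_reward_eq γ
      (fun s => apply_maskAct_of_imp (f := fun a => T (s, a)) (hT s)
        (fun i h => by simp [hg, h]) (π s))
      (fun s => apply_maskAct_of_imp (f := fun a => r (s, a)) (hr s)
        (fun i h => by simp [hg, h]) (π s))
  simpa only [hV] using hopt

/-- Under the assumptions of the masking lemma and uniformly bounded rewards, if `π`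
is optimal then so is the masked policy `π^{(g)}(s) = mask(g s, π s)`. -/
theorem stmt10 {S : Type*} {d : ℕ}
    (T : S × (Fin d → ℝ) → S) (r : S × (Fin d → ℝ) → ℝ) (γ : ℝ)
    (hγ0 : 0 < γ) (hγ1 : γ < 1)
    (R : ℝ) (hR : ∀ (s : S) (a : Fin d → ℝ), |r (s, a)| ≤ R)
    (g₁ g₂ g : S → Fin d → Bool)
    (hg : ∀ (s : S) (i : Fin d), g s i = (g₁ s i || g₂ s i))
    (hr : ∀ (s : S) (a : Fin d → ℝ), r (s, maskAct (g₁ s) a) = r (s, a))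
    (hT : ∀ (s : S) (a : Fin d → ℝ), T (s, maskAct (g₂ s) a) = T (s, a))
    (π : S → Fin d → ℝ)
    (hopt : ∀ s : S, Vpi T r γ π s = Vstar T r γ s) :
    ∀ s : S, Vpi T r γ (fun s' => maskAct (g s') (π s')) s = Vstar T r γ s :=
  stmt10_general T r γ g₁ g₂ g hg hr hT π hopt
end
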